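/- arXiv:2511.04593 — 2 statements merged into one kernel-verified Lean document; each statement's English description precedes it below -/
import Mathlib

section
/- Let L ≥ 2 and 1 ≤ C < L be integers. With B = β·I + γ·J and D = −γ·I + γ·J as above (β = 1/C − (1−1/C)/(2L−2), γ = (1−1/C)/(2L−2)), the Schur complement B − D B⁻¹ D is symmetric positive definite. -/
/-!
Both `B = β I + γ J` and `D = -γ I + γ J` are polynomials in the all-ones matrix `J`, so they act
as scalars on the constant vectors and on their orthogonal complement: `B` by `β + Lγ` and `β`,
`D` by `(L - 1)γ` and `-γ`. Hence the Schur complement `B - D B⁻¹ D` acts by `b - d² / b` on each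
of the two eigenspaces, and this is positive because `|d| < b` there, which reduces to
`0 ≤ γ < β`, i.e. to `1 ≤ C < L`.
-/

namespace Matrix

variable {ι : Type*} [Fintype ι]

noncomputable def meanProj : Matrix ι ι ℝ := (Fintype.card ι : ℝ)⁻¹ • of fun _ _ => 1

lemma meanProj_mul_self : (meanProj : Matrix ι ι ℝ) * meanProj = meanProj := by
  ext i j
  have : Nonempty ι := ⟨i⟩
  simp [meanProj, mul_apply]

lemma meanProj_isHermitian : (meanProj : Matrix ι ι ℝ).IsHermitian := by
  ext i j
  simp [meanProj]

lemma meanProj_posSemidef : (meanProj : Matrix ι ι ℝ).PosSemidef := by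
  have h := posSemidef_conjTranspose_mul_self (meanProj : Matrix ι ι ℝ)
  rwa [meanProj_isHermitian.eq, meanProj_mul_self] at h

variable [DecidableEq ι]

lemma one_sub_meanProj_posSemidef : (1 - meanProj : Matrix ι ι ℝ).PosSemidef := by
  have h := posSemidef_conjTranspose_mul_self (1 - meanProj : Matrix ι ι ℝ)
  rw [(isHermitian_one.sub meanProj_isHermitian).eq] at h
  simpa only [mul_sub, sub_mul, one_mul, mul_one, meanProj_mul_self, sub_self, sub_zero] using h

/-- The matrix acting as `q` on the constant vectors and as `p` on their orthogonal complement. -/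
noncomputable def eigenComb (p q : ℝ) : Matrix ι ι ℝ := p • (1 - meanProj) + q • meanProj

lemma smul_one_add_smul_allOnes_eq_eigenComb (a b : ℝ) :
    a • (1 : Matrix ι ι ℝ) + b • of (fun _ _ => (1 : ℝ)) =
      eigenComb a (a + Fintype.card ι * b) := by
  ext i j
  have : Nonempty ι := ⟨i⟩
  have hcard : (Fintype.card ι : ℝ) ≠ 0 := Nat.cast_ne_zero.2 Fintype.card_ne_zero
  simp only [eigenComb, meanProj, add_apply, sub_apply, smul_apply, smul_of, of_apply,
    Pi.smul_apply, smul_eq_mul, mul_one]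
  field_simp
  ring

lemma eigenComb_mul (p q p' q' : ℝ) :
    (eigenComb p q : Matrix ι ι ℝ) * eigenComb p' q' = eigenComb (p * p') (q * q') := by
  simp only [eigenComb, add_mul, mul_add, smul_mul_smul, sub_mul, mul_sub, one_mul, mul_one,
    meanProj_mul_self, sub_self]
  module

lemma eigenComb_sub (p q p' q' : ℝ) :
    (eigenComb p q : Matrix ι ι ℝ) - eigenComb p' q' = eigenComb (p - p') (q - q') := by
  simp only [eigenComb]
  module

lemma eigenComb_one_one : (eigenComb 1 1 : Matrix ι ι ℝ) = 1 := by
  simp [eigenComb]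

lemma eigenComb_inv {p q : ℝ} (hp : p ≠ 0) (hq : q ≠ 0) :
    (eigenComb p q : Matrix ι ι ℝ)⁻¹ = eigenComb p⁻¹ q⁻¹ :=
  inv_eq_right_inv <| by
    rw [eigenComb_mul, mul_inv_cancel₀ hp, mul_inv_cancel₀ hq, eigenComb_one_one]

lemma eigenComb_posDef {p q : ℝ} (hp : 0 < p) (hq : 0 < q) :
    (eigenComb p q : Matrix ι ι ℝ).PosDef := by
  have h : (eigenComb p q : Matrix ι ι ℝ) =
      min p q • 1 + ((p - min p q) • (1 - meanProj) + (q - min p q) • meanProj) := by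
    simp only [eigenComb]
    module
  rw [h]
  exact (PosDef.one.smul (lt_min hp hq)).add_posSemidef <|
    (one_sub_meanProj_posSemidef.smul (sub_nonneg.2 (min_le_left p q))).add
      (meanProj_posSemidef.smul (sub_nonneg.2 (min_le_right p q)))

lemma eigenComb_schurComplement {b₁ b₂ : ℝ} (hb₁ : b₁ ≠ 0) (hb₂ : b₂ ≠ 0) (d₁ d₂ : ℝ) :
    (eigenComb b₁ b₂ - eigenComb d₁ d₂ * (eigenComb b₁ b₂)⁻¹ * eigenComb d₁ d₂ :
      Matrix ι ι ℝ) = eigenComb (b₁ - d₁ * b₁⁻¹ * d₁) (b₂ - d₂ * b₂⁻¹ * d₂) := by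
  rw [eigenComb_inv hb₁ hb₂, eigenComb_mul, eigenComb_mul, eigenComb_sub]

end Matrix

open Matrix

lemma sub_mul_inv_mul_pos {b d : ℝ} (h : |d| < b) : 0 < b - d * b⁻¹ * d := by
  have hb : 0 < b := (abs_nonneg d).trans_lt h
  rw [mul_right_comm, ← div_eq_mul_inv, sub_pos, div_lt_iff₀ hb]
  nlinarith [abs_mul_abs_self d, abs_nonneg d]

theorem stmt6_general (L C : ℕ) (hC1 : 1 ≤ C) (hCL : C < L)
    (β γ : ℝ)
    (hβ : β = 1 / (C : ℝ) - (1 - 1 / (C : ℝ)) / (2 * (L : ℝ) - 2))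
    (hγ : γ = (1 - 1 / (C : ℝ)) / (2 * (L : ℝ) - 2))
    (B D : Matrix (Fin L) (Fin L) ℝ)
    (hB : B = β • (1 : Matrix (Fin L) (Fin L) ℝ) + γ • (Matrix.of fun _ _ => (1 : ℝ)))
    (hD : D = (-γ) • (1 : Matrix (Fin L) (Fin L) ℝ) + γ • (Matrix.of fun _ _ => (1 : ℝ))) :
    (B - D * B⁻¹ * D).IsSymm ∧ (B - D * B⁻¹ * D).PosDef := by
  have hC : (1 : ℝ) ≤ C := by exact_mod_cast hC1
  have hCL' : (C : ℝ) + 1 ≤ L := by exact_mod_cast hCL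
  have hγ_nonneg : 0 ≤ γ := by
    rw [hγ]
    exact div_nonneg (sub_nonneg.2 ((div_le_one (by linarith)).2 hC)) (by linarith)
  have hγ_lt_β : γ < β := by
    have hgap : β - γ = (L - C) / (C * (L - 1)) := by
      rw [hβ, hγ]
      field_simp [show (L : ℝ) - 1 ≠ 0 by linarith]
      ring
    have : 0 < β - γ := hgap ▸ div_pos (by linarith) (by nlinarith)
    linarith
  rw [smul_one_add_smul_allOnes_eq_eigenComb, Fintype.card_fin] at hB hD
  have hd₁ : |-γ| < β := by rwa [abs_neg, abs_of_nonneg hγ_nonneg]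
  have hd₂ : |-γ + L * γ| < β + L * γ := abs_lt.2 ⟨by nlinarith, by linarith⟩
  have hS : (B - D * B⁻¹ * D).PosDef := by
    rw [hB, hD, eigenComb_schurComplement (by linarith) (by nlinarith)]
    exact eigenComb_posDef (sub_mul_inv_mul_pos hd₁) (sub_mul_inv_mul_pos hd₂)
  exact ⟨isHermitian_iff_isSymm.1 hS.isHermitian, hS⟩

theorem stmt6 (L C : ℕ) (hL : 2 ≤ L) (hC1 : 1 ≤ C) (hCL : C < L)
    (β γ : ℝ)
    (hβ : β = 1 / (C : ℝ) - (1 - 1 / (C : ℝ)) / (2 * (L : ℝ) - 2))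
    (hγ : γ = (1 - 1 / (C : ℝ)) / (2 * (L : ℝ) - 2))
    (B D : Matrix (Fin L) (Fin L) ℝ)
    (hB : B = β • (1 : Matrix (Fin L) (Fin L) ℝ) + γ • (Matrix.of fun _ _ => (1 : ℝ)))
    (hD : D = (-γ) • (1 : Matrix (Fin L) (Fin L) ℝ) + γ • (Matrix.of fun _ _ => (1 : ℝ))) :
    (B - D * B⁻¹ * D).IsSymm ∧ (B - D * B⁻¹ * D).PosDef :=
  stmt6_general L C hC1 hCL β γ hβ hγ B D hB hD
end

section
/- Let L ≥ 2 and 1 ≤ C < L be integers. The (2L)×(2L) block matrix A = [[B, D],[D, B]], with B = β·I + γ·J, D = −γ·I + γ·J, β = 1/C − (1−1/C)/(2L−2), γ = (1−1/C)/(2L−2), is symmetric positive definite. In particular, A·α = 0 implies α = 0. -/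
/-!
Writing a vector as `(u, v)`, the quadratic form of `A = [[B, D], [D, B]]` splits as
`2 xᴴ A x = (u + v)ᴴ (B + D) (u + v) + (u - v)ᴴ (B - D) (u - v)`, so `A` is positive definite
as soon as `B + D` and `B - D` are. Here `B - D = (1 / C) • 1` and
`B + D = (β - γ) • 1 + 2γ • J` with `J` the all-ones matrix and `β - γ = (L - C) / (C (L - 1)) > 0`.
-/

open Matrix

namespace Matrix

variable {n 𝕜 : Type*} [RCLike 𝕜]

lemma isHermitian_fromBlocks_of_add_of_sub {B D : Matrix n n 𝕜}
    (hAdd : (B + D).IsHermitian) (hSub : (B - D).IsHermitian) :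
    (fromBlocks B D D B).IsHermitian := by
  have hB : B.IsHermitian := IsHermitian.ext fun i j => by
    have h₁ := hAdd.apply i j
    have h₂ := hSub.apply i j
    simp only [add_apply, sub_apply, star_add, star_sub] at h₁ h₂
    linear_combination (h₁ + h₂) / 2
  have hD : D.IsHermitian := IsHermitian.ext fun i j => by
    have h₁ := hAdd.apply i j
    have h₂ := hSub.apply i j
    simp only [add_apply, sub_apply, star_add, star_sub] at h₁ h₂
    linear_combination (h₁ - h₂) / 2
  exact hB.fromBlocks hD.eq hB

variable [Fintype n]

lemma two_mul_star_dotProduct_fromBlocks_mulVec {R : Type*} [CommRing R] [StarRing R]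
    (B D : Matrix n n R) (u v : n → R) :
    2 * (star (Sum.elim u v) ⬝ᵥ fromBlocks B D D B *ᵥ Sum.elim u v) =
      star (u + v) ⬝ᵥ (B + D) *ᵥ (u + v) + star (u - v) ⬝ᵥ (B - D) *ᵥ (u - v) := by
  simp only [fromBlocks_mulVec, Sum.elim_comp_inl, Sum.elim_comp_inr, Function.star_sumElim,
    sumElim_dotProduct_sumElim, star_add, star_sub, add_mulVec, sub_mulVec, mulVec_add,
    mulVec_sub, dotProduct_add, dotProduct_sub, add_dotProduct, sub_dotProduct]
  ring

open scoped ComplexOrder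

lemma posDef_fromBlocks_of_posDef_add_of_posDef_sub {B D : Matrix n n 𝕜}
    (hAdd : (B + D).PosDef) (hSub : (B - D).PosDef) : (fromBlocks B D D B).PosDef := by
  refine .of_dotProduct_mulVec_pos
    (isHermitian_fromBlocks_of_add_of_sub hAdd.isHermitian hSub.isHermitian) fun x hx => ?_
  rw [← Sum.elim_comp_inl_inr x] at hx ⊢
  set u := x ∘ Sum.inl
  set v := x ∘ Sum.inr
  refine pos_of_mul_pos_right (a := 2) ?_ zero_le_two
  rw [two_mul_star_dotProduct_fromBlocks_mulVec]
  by_cases huv : u + v = 0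
  · have hu_sub_v : u - v ≠ 0 := by
      intro h
      have hv : v = 0 := funext fun i => by
        have h₁ := congrFun huv i
        have h₂ := congrFun h i
        simp only [Pi.add_apply, Pi.sub_apply, Pi.zero_apply] at h₁ h₂ ⊢
        linear_combination (h₁ - h₂) / 2
      simp_all
    rw [huv, star_zero, zero_dotProduct, zero_add]
    exact hSub.dotProduct_mulVec_pos hu_sub_v
  · exact add_pos_of_pos_of_nonneg (hAdd.dotProduct_mulVec_pos huv)
      (hSub.posSemidef.dotProduct_mulVec_nonneg _)

lemma posDef_smul_one_add_smul_allOnes [DecidableEq n] {a b : 𝕜} (ha : 0 < a) (hb : 0 ≤ b) :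
    (a • (1 : Matrix n n 𝕜) + b • of fun _ _ => (1 : 𝕜)).PosDef := by
  have hJ : (of fun _ _ => (1 : 𝕜) : Matrix n n 𝕜).PosSemidef := by
    simpa [vecMulVec] using posSemidef_vecMulVec_self_star (1 : n → 𝕜)
  exact (PosDef.one.smul ha).add_posSemidef (hJ.smul hb)

end Matrix

theorem stmt7_general (L C : ℕ) (hC1 : 1 ≤ C) (hCL : C < L)
    (β γ : ℝ)
    (hβ : β = 1 / (C : ℝ) - (1 - 1 / (C : ℝ)) / (2 * (L : ℝ) - 2))
    (hγ : γ = (1 - 1 / (C : ℝ)) / (2 * (L : ℝ) - 2))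
    (B D : Matrix (Fin L) (Fin L) ℝ)
    (hB : B = β • (1 : Matrix (Fin L) (Fin L) ℝ) + γ • (Matrix.of fun _ _ => (1 : ℝ)))
    (hD : D = (-γ) • (1 : Matrix (Fin L) (Fin L) ℝ) + γ • (Matrix.of fun _ _ => (1 : ℝ)))
    (A : Matrix (Fin L ⊕ Fin L) (Fin L ⊕ Fin L) ℝ)
    (hA : A = Matrix.fromBlocks B D D B) :
    A.IsSymm ∧ A.PosDef ∧ ∀ α : Fin L ⊕ Fin L → ℝ, A.mulVec α = 0 → α = 0 := by
  have hC : (1 : ℝ) ≤ C := by exact_mod_cast hC1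
  have hCL' : (C : ℝ) < L := by exact_mod_cast hCL
  have hγ_nonneg : 0 ≤ γ := by
    rw [hγ]
    exact div_nonneg (sub_nonneg.mpr (div_le_one_of_le₀ hC (by positivity))) (by linarith)
  have hβ_sub_γ : β - γ = (L - C) / (C * (L - 1)) := by
    rw [hβ, hγ]
    field_simp [show (2 * L - 2 : ℝ) = 2 * (L - 1) by ring, show (L - 1 : ℝ) ≠ 0 by linarith]
    ring
  have hβ_add_γ : β + γ = 1 / C := by rw [hβ, hγ]; ring
  have hA_posDef : A.PosDef := by
    rw [hA]
    refine posDef_fromBlocks_of_posDef_add_of_posDef_sub ?_ ?_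
    · rw [show B + D = (β - γ) • 1 + (2 * γ) • of fun _ _ => 1 by rw [hB, hD]; module]
      refine posDef_smul_one_add_smul_allOnes ?_ (by positivity)
      rw [hβ_sub_γ]
      exact div_pos (by linarith) (by nlinarith)
    · rw [show B - D = (β + γ) • 1 by rw [hB, hD]; module, hβ_add_γ]
      exact PosDef.one.smul (by positivity)
  refine ⟨isHermitian_iff_isSymm.mp hA_posDef.isHermitian, hA_posDef, fun α hα => ?_⟩
  exact mulVec_injective_iff_isUnit.mpr hA_posDef.isUnit (by rw [hα, mulVec_zero])

theorem stmt7 (L C : ℕ) (hL : 2 ≤ L) (hC1 : 1 ≤ C) (hCL : C < L)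
    (β γ : ℝ)
    (hβ : β = 1 / (C : ℝ) - (1 - 1 / (C : ℝ)) / (2 * (L : ℝ) - 2))
    (hγ : γ = (1 - 1 / (C : ℝ)) / (2 * (L : ℝ) - 2))
    (B D : Matrix (Fin L) (Fin L) ℝ)
    (hB : B = β • (1 : Matrix (Fin L) (Fin L) ℝ) + γ • (Matrix.of fun _ _ => (1 : ℝ)))
    (hD : D = (-γ) • (1 : Matrix (Fin L) (Fin L) ℝ) + γ • (Matrix.of fun _ _ => (1 : ℝ)))
    (A : Matrix (Fin L ⊕ Fin L) (Fin L ⊕ Fin L) ℝ)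
    (hA : A = Matrix.fromBlocks B D D B) :
    A.IsSymm ∧ A.PosDef ∧ ∀ α : Fin L ⊕ Fin L → ℝ, A.mulVec α = 0 → α = 0 :=
  stmt7_general L C hC1 hCL β γ hβ hγ B D hB hD A hA
end
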